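/- Let n ≥ 2 be an integer. For 1 ≤ j ≤ n set q_j = (n + 1 − 2j)/(2n) ∈ ℚ. Let σ be a permutation of {1, …, n} and let k₁, …, k_n be integers. Define x_i = q_{σ(i)} + k_i for 1 ≤ i ≤ n. If x_i ≥ x_{i+1} for all 1 ≤ i ≤ n − 1 and x_{i₀} − x_{i₀+1} ≥ 2/n for some index i₀, then x₁ − x_n ≥ 1. -/

import Mathlib

/-!
Multiplying by `n`, the difference of two orbit coordinates `x i - x j` becomes the integer
`σ j - σ i + n (k i - k j)`, which cannot vanish for `i ≠ j` since distinct residues in `[0, n)`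
are incongruent modulo `n`. Hence a nonincreasing orbit element drops by at least `1/n` at each of
its `n - 1` steps, and one step of at least `2/n` brings the total drop to `n · (1/n) = 1`.
-/

lemma Fin.intCast_sub_add_mul_ne_zero {n : ℕ} {a b : Fin n} (hab : a ≠ b) (m : ℤ) :
    (a : ℤ) - b + n * m ≠ 0 := by
  intro h
  have hdvd : (n : ℤ) ∣ (a : ℤ) - b := ⟨-m, by linear_combination h⟩
  have hlt : |(a : ℤ) - b| < n := abs_sub_lt_iff.mpr ⟨by omega, by omega⟩
  have hzero := Int.eq_zero_of_abs_lt_dvd hdvd hlt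
  exact hab (Fin.ext (by omega))

lemma one_div_le_sub_of_ne {n : ℕ} {c y z : ℚ} {a b : Fin n} {k l : ℤ}
    (hy : y = (c - a) / n + k) (hz : z = (c - b) / n + l) (hab : a ≠ b) (hzy : z ≤ y) :
    1 / n ≤ y - z := by
  have hn : (0 : ℚ) < n := by exact_mod_cast a.pos
  have hmul : (n : ℚ) * (y - z) = ((b : ℤ) - a + n * (k - l) : ℤ) := by
    rw [hy, hz]
    push_cast
    field_simp
    ring
  have hnonneg : (0 : ℚ) ≤ n * (y - z) := mul_nonneg hn.le (sub_nonneg.mpr hzy)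
  rw [hmul] at hnonneg
  have hpos : (0 : ℤ) < (b : ℤ) - a + n * (k - l) :=
    lt_of_le_of_ne (by exact_mod_cast hnonneg) (Fin.intCast_sub_add_mul_ne_zero hab.symm _).symm
  rw [div_le_iff₀ hn, mul_comm, hmul]
  exact_mod_cast hpos

lemma nsmul_le_sub_of_forall_le_sub {α : Type*} [AddCommGroup α] [PartialOrder α]
    [IsOrderedAddMonoid α] {f : ℕ → α} {d : α} {a b : ℕ} (hab : a ≤ b)
    (h : ∀ i, a ≤ i → i < b → d ≤ f i - f (i + 1)) : (b - a) • d ≤ f a - f b := by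
  induction b, hab using Nat.le_induction with
  | base => simp
  | succ b hab ih =>
    rw [Nat.sub_add_comm hab, succ_nsmul, ← sub_add_sub_cancel (f a) (f b)]
    exact add_le_add (ih fun i hai hib => h i hai (by omega)) (h b hab (by omega))

lemma succ_nsmul_le_sub_of_forall_le_sub {α : Type*} [AddCommGroup α] [PartialOrder α]
    [IsOrderedAddMonoid α] {f : ℕ → α} {d : α} {m i₀ : ℕ} (hi₀ : i₀ < m)
    (h : ∀ i < m, d ≤ f i - f (i + 1)) (hgap : 2 • d ≤ f i₀ - f (i₀ + 1)) :
    (m + 1) • d ≤ f 0 - f m := by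
  have hbefore := nsmul_le_sub_of_forall_le_sub (Nat.zero_le i₀) fun i _ hi => h i (by omega)
  have hafter := nsmul_le_sub_of_forall_le_sub hi₀ fun i _ hi => h i hi
  calc (m + 1) • d = (i₀ - 0) • d + 2 • d + (m - (i₀ + 1)) • d := by
        rw [← add_nsmul, ← add_nsmul]
        congr 1
        omega
    _ ≤ (f 0 - f i₀) + (f i₀ - f (i₀ + 1)) + (f (i₀ + 1) - f m) :=
        add_le_add (add_le_add hbefore hgap) hafter
    _ = f 0 - f m := by abel

/-- Type A case (2) gap estimate: if an element of the affine Weyl orbit of the Iwahori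
barycenter `q_j = (n + 1 - 2j)/(2n)` is nonincreasing and has some consecutive gap of
size at least `2/n`, then the difference of its first and last coordinates is at
least `1`. -/
theorem affine_weyl_orbit_barycenter_gap
    (n : ℕ) (σ : Equiv.Perm (Fin n)) (k : Fin n → ℤ)
    (q : Fin n → ℚ)
    (hq : ∀ j : Fin n, q j = ((n : ℚ) - 1 - 2 * ((j : ℕ) : ℚ)) / (2 * n))
    (x : Fin n → ℚ) (hx : ∀ i : Fin n, x i = q (σ i) + (k i : ℚ))
    (hmono : ∀ (i : ℕ) (h : i + 1 < n), x ⟨i + 1, h⟩ ≤ x ⟨i, by omega⟩)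
    (i₀ : ℕ) (h₀ : i₀ + 1 < n)
    (hgap : 2 / (n : ℚ) ≤ x ⟨i₀, by omega⟩ - x ⟨i₀ + 1, h₀⟩) :
    1 ≤ x ⟨0, by omega⟩ - x ⟨n - 1, by omega⟩ := by
  have hxσ (i : Fin n) : x i = (((n : ℚ) - 1) / 2 - σ i) / n + k i := by
    rw [hx, hq]
    ring
  set f : ℕ → ℚ := fun j => if h : j < n then x ⟨j, h⟩ else 0 with hf
  have hstep (i : ℕ) (h : i < n - 1) : 1 / (n : ℚ) ≤ f i - f (i + 1) := by
    have h' : i + 1 < n := by omega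
    simp only [hf, dif_pos h', dif_pos (Nat.lt_of_succ_lt h')]
    exact one_div_le_sub_of_ne (hxσ _) (hxσ _)
      (σ.injective.ne (by simp [Fin.ext_iff])) (hmono i h')
  have hgap' : 2 • (1 / (n : ℚ)) ≤ f i₀ - f (i₀ + 1) := by
    simpa only [hf, dif_pos h₀, dif_pos (Nat.lt_of_succ_lt h₀), nsmul_eq_mul, Nat.cast_ofNat,
      mul_one_div] using hgap
  have htotal := succ_nsmul_le_sub_of_forall_le_sub (by omega) hstep hgap'
  have hn : (n : ℚ) ≠ 0 := by exact_mod_cast (by omega : n ≠ 0)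
  rw [Nat.sub_add_cancel (by omega), nsmul_eq_mul, mul_one_div_cancel hn] at htotal
  simpa only [hf, dif_pos (by omega : 0 < n), dif_pos (by omega : n - 1 < n)] using htotal
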